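/- Let X_1, ..., X_n be independent Bernoulli random variables (indicator random variables), and for each edge e in a family E of subsets of {1,...,n}, let Y_e = ∏_{i ∈ e} X_i be the indicator that all coordinates of e equal 1. Then P[Y_e = 0 for all e ∈ E] ≥ ∏_{e ∈ E} P[Y_e = 0]. -/

import Mathlib

/-!
Each event `{Y_e = 0} = {∃ i ∈ e, X_i = 0}` is a down-set of the cube `Fin n → Bool`, and the
product Bernoulli weight is modular: `μ (a ⊓ b) * μ (a ⊔ b) = μ a * μ b`. The four functions
theorem then yields Harris's inequality `μ A * μ B ≤ μ (A ∩ B)` for down-sets `A`, `B`, and since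
intersections of down-sets are down-sets, induction over `E` gives the product bound.
-/

/-- The probability of an outcome `ω : Fin n → Bool` of `n` independent
Bernoulli random variables with success probabilities `p i`. -/
noncomputable def bernoulliWeight {n : ℕ} (p : Fin n → ℝ) (ω : Fin n → Bool) : ℝ :=
  ∏ i, if ω i then p i else 1 - p i

open Finset
open scoped FinsetFamily

section Harris

variable {α : Type*} [DistribLattice α] [Fintype α] [DecidableEq α] {μ : α → ℝ}

theorem sum_filter_mul_sum_filter_le_of_antitone (hμ₀ : 0 ≤ μ)
    (hμ : ∀ a b, μ a * μ b ≤ μ (a ⊓ b) * μ (a ⊔ b))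
    {P Q : α → Prop} [DecidablePred P] [DecidablePred Q] (hP : Antitone P) (hQ : Antitone Q) :
    (∑ a with P a, μ a) * ∑ a with Q a, μ a ≤ (∑ a with P a ∧ Q a, μ a) * ∑ a, μ a := by
  have hinfs : univ.filter P ⊼ univ.filter Q ⊆ univ.filter fun a => P a ∧ Q a := by
    simp only [subset_iff, mem_infs, mem_filter_univ]
    rintro _ ⟨a, ha, b, hb, rfl⟩
    exact ⟨hP inf_le_left ha, hQ inf_le_right hb⟩
  calc (∑ a with P a, μ a) * ∑ a with Q a, μ a
      ≤ (∑ a ∈ univ.filter P ⊼ univ.filter Q, μ a) * ∑ a ∈ univ.filter P ⊻ univ.filter Q, μ a :=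
        four_functions_theorem μ μ μ μ hμ₀ hμ₀ hμ₀ hμ₀ hμ _ _
    _ ≤ (∑ a with P a ∧ Q a, μ a) * ∑ a, μ a :=
        mul_le_mul (sum_le_sum_of_subset_of_nonneg hinfs fun a _ _ => hμ₀ a)
          (sum_le_sum_of_subset_of_nonneg (subset_univ _) fun a _ _ => hμ₀ a)
          (sum_nonneg fun a _ => hμ₀ a) (sum_nonneg fun a _ => hμ₀ a)

theorem prod_sum_filter_le_sum_filter_forall_of_antitone (hμ₀ : 0 ≤ μ)
    (hμ : ∀ a b, μ a * μ b ≤ μ (a ⊓ b) * μ (a ⊔ b)) (hμ₁ : ∑ a, μ a = 1)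
    {ι : Type*} [DecidableEq ι] {P : ι → α → Prop} [∀ i, DecidablePred (P i)]
    (hP : ∀ i, Antitone (P i)) (I : Finset ι) :
    ∏ i ∈ I, ∑ a with P i a, μ a ≤ ∑ a with ∀ i ∈ I, P i a, μ a := by
  induction I using Finset.induction_on with
  | empty => simp [hμ₁]
  | @insert j I hj ih =>
    have hI : Antitone fun a => ∀ i ∈ I, P i a := fun a b hab hb i hi => hP i hab (hb i hi)
    calc ∏ i ∈ insert j I, ∑ a with P i a, μ a
        = (∑ a with P j a, μ a) * ∏ i ∈ I, ∑ a with P i a, μ a := prod_insert hj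
      _ ≤ (∑ a with P j a, μ a) * ∑ a with ∀ i ∈ I, P i a, μ a := by
          gcongr
          exact sum_nonneg fun a _ => hμ₀ a
      _ ≤ ∑ a with P j a ∧ ∀ i ∈ I, P i a, μ a := by
          simpa [hμ₁] using sum_filter_mul_sum_filter_le_of_antitone hμ₀ hμ (hP j) hI
      _ = ∑ a with ∀ i ∈ insert j I, P i a, μ a := by simp only [forall_mem_insert]

end Harris

section Bernoulli

variable {n : ℕ} (p : Fin n → ℝ)

theorem bernoulliWeight_nonneg (hp : ∀ i, 0 ≤ p i ∧ p i ≤ 1) : 0 ≤ bernoulliWeight p := by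
  intro ω
  refine prod_nonneg fun i _ => ?_
  split <;> linarith [hp i]

theorem sum_bernoulliWeight : ∑ ω, bernoulliWeight p ω = 1 := by
  simpa [bernoulliWeight] using (Fintype.prod_sum fun i (b : Bool) => if b then p i else 1 - p i).symm

theorem bernoulliWeight_inf_mul_sup (a b : Fin n → Bool) :
    bernoulliWeight p (a ⊓ b) * bernoulliWeight p (a ⊔ b)
      = bernoulliWeight p a * bernoulliWeight p b := by
  simp only [bernoulliWeight, ← prod_mul_distrib]
  refine prod_congr rfl fun i _ => ?_
  cases ha : a i <;> cases hb : b i <;> simp [ha, hb, mul_comm]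

end Bernoulli

theorem antitone_exists_mem_eq_false {n : ℕ} (e : Finset (Fin n)) :
    Antitone fun ω : Fin n → Bool => ∃ i ∈ e, ω i = false := by
  rintro ω ω' hle ⟨i, hi, h⟩
  have := hle i
  rw [h] at this
  exact ⟨i, hi, le_bot_iff.1 this⟩

theorem stmt_10_general (n : ℕ) (p : Fin n → ℝ) (hp : ∀ i, 0 ≤ p i ∧ p i ≤ 1)
    (E : Finset (Finset (Fin n))) :
    ∑ ω ∈ Finset.univ.filter
        (fun ω : Fin n → Bool => ∀ e ∈ E, ∃ i ∈ e, ω i = false),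
      bernoulliWeight p ω ≥
    ∏ e ∈ E, ∑ ω ∈ Finset.univ.filter
        (fun ω : Fin n → Bool => ∃ i ∈ e, ω i = false),
      bernoulliWeight p ω := by
  -- the two sides differ only in their `Decidable` instances
  convert prod_sum_filter_le_sum_filter_forall_of_antitone (bernoulliWeight_nonneg p hp)
    (fun a b => (bernoulliWeight_inf_mul_sup p a b).ge) (sum_bernoulliWeight p)
    antitone_exists_mem_eq_false E

/-- For independent Bernoulli variables `X i` and edges `e ∈ E`, with
`Y_e = ∏_{i ∈ e} X i`, the events `{Y_e = 0}` are positively correlated: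
`P[∀ e ∈ E, Y_e = 0] ≥ ∏_{e ∈ E} P[Y_e = 0]`. -/
theorem stmt_10 (n : ℕ) (p : Fin n → ℝ) (hp : ∀ i, 0 ≤ p i ∧ p i ≤ 1)
    (E : Finset (Finset (Fin n))) (hE : ∀ e ∈ E, e.Nonempty) :
    ∑ ω ∈ Finset.univ.filter
        (fun ω : Fin n → Bool => ∀ e ∈ E, ∃ i ∈ e, ω i = false),
      bernoulliWeight p ω ≥
    ∏ e ∈ E, ∑ ω ∈ Finset.univ.filter
        (fun ω : Fin n → Bool => ∃ i ∈ e, ω i = false),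
      bernoulliWeight p ω :=
  stmt_10_general n p hp E
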